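/- arXiv:2601.09084 — 3 statements merged into one kernel-verified Lean document; each statement's English description precedes it below -/
import Mathlib

section
/- Let δ ∈ ℝ with |δ| ≤ 1/4. Then 2δ² ≤ KL(Bern(1/2+δ) ‖ Bern(1/2)) ≤ (9/4)δ². -/
set_option maxHeartbeats 1000000

open Real Finset

lemma log_taylor8 (x : ℝ) (h0 : 0 ≤ x) (h1 : x ≤ 1/2) :
    x ^ 2 ≤ (1+x) * Real.log (1+x) + (1-x) * Real.log (1-x) ∧
    (1+x) * Real.log (1+x) + (1-x) * Real.log (1-x) ≤ 9/8 * x ^ 2 := by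
  have hx1 : |x| < 1 := by rw [abs_of_nonneg h0]; linarith
  have hx2 : |(-x)| < 1 := by rw [abs_neg]; exact hx1
  have h1' := Real.abs_log_sub_add_sum_range_le hx1 8
  have h2' := Real.abs_log_sub_add_sum_range_le hx2 8
  rw [abs_of_nonneg h0] at h1'
  rw [abs_neg, abs_of_nonneg h0] at h2'
  simp only [Finset.sum_range_succ, Finset.sum_range_zero] at h1' h2'
  norm_num at h1' h2'
  rw [abs_le] at h1' h2'
  obtain ⟨l1a, l1b⟩ := h1'
  obtain ⟨l2a, l2b⟩ := h2'
  ring_nf at l2a l2b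
  have hden : x ^ 9 / (1 - x) ≤ 2 * x ^ 9 := by
    rw [div_le_iff₀ (by linarith)]
    nlinarith [pow_nonneg h0 9]
  have hden2 : x ^ 9 * (1 - x)⁻¹ ≤ 2 * x ^ 9 := by
    rw [← div_eq_mul_inv]; exact hden
  -- replace error term by 2*x^9
  have l1a' : -(2 * x ^ 9) ≤ x + x ^ 2 / 2 + x ^ 3 / 3 + x ^ 4 / 4 + x ^ 5 / 5
      + x ^ 6 / 6 + x ^ 7 / 7 + x ^ 8 / 8 + Real.log (1 - x) := by linarith
  have l1b' : x + x ^ 2 / 2 + x ^ 3 / 3 + x ^ 4 / 4 + x ^ 5 / 5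
      + x ^ 6 / 6 + x ^ 7 / 7 + x ^ 8 / 8 + Real.log (1 - x) ≤ 2 * x ^ 9 := by linarith
  have l2a' : -(2 * x ^ 9) ≤ -x + x ^ 2 * (1 / 2) + x ^ 3 * (-1 / 3) + x ^ 4 * (1 / 4)
      + x ^ 5 * (-1 / 5) + x ^ 6 * (1 / 6) + x ^ 7 * (-1 / 7) + x ^ 8 * (1 / 8)
      + Real.log (1 + x) := by linarith
  have l2b' : -x + x ^ 2 * (1 / 2) + x ^ 3 * (-1 / 3) + x ^ 4 * (1 / 4)
      + x ^ 5 * (-1 / 5) + x ^ 6 * (1 / 6) + x ^ 7 * (-1 / 7) + x ^ 8 * (1 / 8)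
      + Real.log (1 + x) ≤ 2 * x ^ 9 := by linarith
  have h1x : (0:ℝ) ≤ 1 + x := by linarith
  have h2x : (0:ℝ) ≤ 1 - x := by linarith
  have a1 := mul_le_mul_of_nonneg_left l2a' h1x
  have a2 := mul_le_mul_of_nonneg_left l2b' h1x
  have b1 := mul_le_mul_of_nonneg_left l1a' h2x
  have b2 := mul_le_mul_of_nonneg_left l1b' h2x
  ring_nf at a1 a2 b1 b2 ⊢
  -- monomial bounds
  have hxx : x ^ 2 ≤ 1 / 4 := by nlinarith
  have m4 : x ^ 4 ≤ (1/4) * x ^ 2 := by nlinarith [sq_nonneg x]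
  have m6 : x ^ 6 ≤ (1/16) * x ^ 2 := by nlinarith [sq_nonneg x, pow_nonneg h0 4, sq_nonneg (x^2)]
  have m8 : x ^ 8 ≤ (1/64) * x ^ 2 := by nlinarith [pow_nonneg h0 6, pow_nonneg h0 4, sq_nonneg (x^3)]
  have m9 : x ^ 9 ≤ (1/32) * x ^ 4 := by nlinarith [pow_nonneg h0 4, pow_le_pow_left₀ h0 h1 5]
  have m9' : x ^ 9 ≤ (1/128) * x ^ 2 := by linarith
  have m10 : x ^ 10 ≤ (1/2) * x ^ 9 := by nlinarith [pow_nonneg h0 9]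
  have m10' : (0:ℝ) ≤ x ^ 10 := pow_nonneg h0 10
  have m9'' : (0:ℝ) ≤ x ^ 9 := pow_nonneg h0 9
  have m6' : (0:ℝ) ≤ x ^ 6 := pow_nonneg h0 6
  have m8' : (0:ℝ) ≤ x ^ 8 := pow_nonneg h0 8
  have m4' : (0:ℝ) ≤ x ^ 4 := pow_nonneg h0 4
  constructor
  · linarith
  · linarith


/-- KL divergence between `Bern(p)` and `Bern(1/2)`:
`KL(Bern(p) ‖ Bern(1/2)) = p·log(2p) + (1−p)·log(2(1−p))`. -/
noncomputable def klBern (p : ℝ) : ℝ :=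
  p * Real.log (2 * p) + (1 - p) * Real.log (2 * (1 - p))

/-- **Quadratic KL scaling.** If `|δ| ≤ 1/4`, then
`2δ² ≤ KL(Bern(1/2+δ) ‖ Bern(1/2)) ≤ (9/4)δ²`. -/
theorem kl_quadratic_scaling (δ : ℝ) (hδ : |δ| ≤ 1/4) :
    2 * δ ^ 2 ≤ klBern (1/2 + δ) ∧ klBern (1/2 + δ) ≤ 9/4 * δ ^ 2 := by
  rw [abs_le] at hδ
  obtain ⟨hl, hr⟩ := hδ
  rcases le_total 0 δ with h | h
  · have hx := log_taylor8 (2*δ) (by linarith) (by linarith)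
    have e1 : 2*(1/2+δ) = 1+2*δ := by ring
    have e2 : 2*(1-(1/2+δ)) = 1-(2*δ) := by ring
    simp only [klBern, e1, e2]
    constructor
    · have := hx.1; nlinarith
    · have := hx.2; nlinarith
  · have hx := log_taylor8 (-(2*δ)) (by linarith) (by linarith)
    have e1 : 2*(1/2+δ) = 1-(-(2*δ)) := by ring
    have e2 : 2*(1-(1/2+δ)) = 1+(-(2*δ)) := by ring
    simp only [klBern, e1, e2]
    constructor
    · have := hx.1; nlinarith
    · have := hx.2; nlinarith
end

section
/- Let m ≥ 1, let w_1,…,w_m > 0 with Σ_i w_i = 1, let N_1,…,N_m be natural numbers with Σ_i N_i = B, and let μ₂ satisfy 0 < μ₂ ≤ (1/16)·min_i w_i. Then for any test φ on the B observations, sup over δ ∈ H1(μ₂) with each |δ_i| ≤ 1/4 of [ P_0^N(φ = 1) + P_δ^N(φ = 0) ] ≥ (1/2)·exp( −(9/4)·μ₂·min_i (N_i/w_i) ). -/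
open Real

/-- Probability mass of a Bernoulli(p) outcome. -/
def bernPMF (p : ℝ) : Bool → ℝ := fun b => if b then p else 1 - p

/-- Probability mass function of the allocation product measure `P_δ^N` on
`{0,1}^{N_1+…+N_m}` (observations indexed by `(i, j)` with `i` a prompt type and
`j < N_i`), in which each observation of type `i` is `Bernoulli(1/2 + δ_i)`. -/
noncomputable def allocPMF (m : ℕ) (N : Fin m → ℕ) (δ : Fin m → ℝ)
    (y : (Σ i : Fin m, Fin (N i)) → Bool) : ℝ :=
  ∏ s : Σ i : Fin m, Fin (N i), bernPMF (1/2 + δ s.1) (y s)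

/-- KL divergence `KL(P_δ^N ‖ P_0^N)` between the allocation product measure with margins
`δ` and the corresponding uniform measure (`δ ≡ 0`). -/
noncomputable def klAlloc (m : ℕ) (N : Fin m → ℕ) (δ : Fin m → ℝ) : ℝ :=
  ∑ y : (Σ i : Fin m, Fin (N i)) → Bool,
    allocPMF m N δ y * Real.log (allocPMF m N δ y / allocPMF m N (fun _ => 0) y)

/-- Probability of an event under the allocation product measure `P_δ^N`. -/
noncomputable def allocProb (m : ℕ) (N : Fin m → ℕ) (δ : Fin m → ℝ)
    (E : Set ((Σ i : Fin m, Fin (N i)) → Bool)) : ℝ :=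
  ∑ y : (Σ i : Fin m, Fin (N i)) → Bool, E.indicator (allocPMF m N δ) y

/- ### Auxiliary lemmas -/

lemma sum_fun_bool_prod {ι : Type*} [Fintype ι] [DecidableEq ι] (f : ι → Bool → ℝ) :
    ∑ y : ι → Bool, ∏ s, f s (y s) = ∏ s, (f s true + f s false) := by
  have := Finset.prod_univ_sum (fun _ : ι => (Finset.univ : Finset Bool)) f
  rw [Fintype.piFinset_univ] at this
  rw [← this]
  exact Finset.prod_congr rfl fun s _ => by rw [Fintype.sum_bool]

lemma sqrt_finset_prod {ι : Type*} (s : Finset ι) (f : ι → ℝ) (hf : ∀ i ∈ s, 0 ≤ f i) :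
    Real.sqrt (∏ i ∈ s, f i) = ∏ i ∈ s, Real.sqrt (f i) := by
  induction s using Finset.cons_induction with
  | empty => simp
  | cons a s ha ih =>
      rw [Finset.prod_cons, Finset.prod_cons,
        Real.sqrt_mul (hf a (Finset.mem_cons_self _ _)),
        ih fun i hi => hf i (Finset.mem_cons_of_mem hi)]

lemma scalar_key {t : ℝ} (ht0 : 0 ≤ t) (ht : t ≤ 1/4) :
    Real.exp (-((9/4) * t^2)) ≤
      (Real.sqrt ((1/2) * (1/2 + t)) + Real.sqrt ((1/2) * (1/2 - t)))^2 := by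
  have ht2 : t^2 ≤ 1/16 := by nlinarith
  set u : ℝ := (9/4) * t^2 with hu
  have hu0 : 0 ≤ u := by positivity
  have hu1 : u ≤ 9/64 := by rw [hu]; nlinarith
  have h1 : Real.exp (-u) ≤ 1 / (1 + u) := by
    rw [Real.exp_neg, inv_eq_one_div]
    apply one_div_le_one_div_of_le (by positivity)
    exact (Real.add_one_le_exp u).trans_eq' (by ring)
  refine h1.trans ?_
  have ha : (0:ℝ) ≤ (1/2) * (1/2 + t) := by nlinarith
  have hb : (0:ℝ) ≤ (1/2) * (1/2 - t) := by nlinarith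
  have hsq : (Real.sqrt ((1/2) * (1/2 + t)) + Real.sqrt ((1/2) * (1/2 - t)))^2
      = 1/2 + Real.sqrt (1/4 - t^2) := by
    have h2 : Real.sqrt ((1/2) * (1/2 + t)) * Real.sqrt ((1/2) * (1/2 - t))
        = Real.sqrt ((1/4) * (1/4 - t^2)) := by
      rw [← Real.sqrt_mul ha]; ring_nf
    have h3 : Real.sqrt ((1/4) * (1/4 - t^2)) = (1/2) * Real.sqrt (1/4 - t^2) := by
      rw [show (1/4 : ℝ) = (1/2)^2 by norm_num, Real.sqrt_mul (by positivity),
        Real.sqrt_sq (by norm_num)]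
    rw [add_sq, Real.sq_sqrt ha, Real.sq_sqrt hb, mul_assoc, h2, h3]; ring
  rw [hsq]
  set s : ℝ := Real.sqrt (1/4 - t^2) with hs
  have hs0 : 0 ≤ s := Real.sqrt_nonneg _
  have hs2 : s^2 = 1/4 - t^2 := Real.sq_sqrt (by nlinarith)
  rw [div_le_iff₀ (by positivity)]
  have h5 : (0:ℝ) ≤ 5 - 8*u - 4*u^2 := by nlinarith [hu0, hu1]
  have h4 : (1-u)^2 ≤ (2*(1+u)*s)^2 := by
    nlinarith [hs2, mul_nonneg (sq_nonneg t) h5, hu]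
  have key : 1 - u ≤ 2*(1+u)*s := by
    have := Real.sqrt_le_sqrt h4
    rwa [Real.sqrt_sq (by nlinarith), Real.sqrt_sq (by positivity)] at this
  nlinarith [key, hu0, hs0]

lemma bernPMF_nonneg {p : ℝ} (h0 : 0 ≤ p) (h1 : p ≤ 1) (b : Bool) : 0 ≤ bernPMF p b := by
  cases b <;> simp [bernPMF] <;> linarith

lemma allocPMF_sum_one (m : ℕ) (N : Fin m → ℕ) (δ : Fin m → ℝ) :
    ∑ y : (Σ i : Fin m, Fin (N i)) → Bool, allocPMF m N δ y = 1 := by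
  unfold allocPMF
  rw [sum_fun_bool_prod]
  refine Finset.prod_eq_one fun s _ => ?_
  simp [bernPMF]

set_option maxHeartbeats 1000000 in
/-- **Allocation-bottleneck lower bound.** Let `w_1,…,w_m > 0` sum to `1`, let the
allocation `N` have total budget `Σ_i N_i = B`, and let `0 < μ₂ ≤ (1/16)·min_i w_i`.
Then for any test `φ` on the `B` observations, the worst-case risk over the composite
alternative `H1(μ₂) = {δ : Σ_i w_i·δ_i² ≥ μ₂}` (with each `|δ_i| ≤ 1/4`) satisfies
`sup_δ [P_0^N(φ=1) + P_δ^N(φ=0)] ≥ (1/2)·exp(−(9/4)·μ₂·min_i (N_i/w_i))`; indeed some such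
`δ` attains this bound. -/
theorem allocation_bottleneck_lower_bound (m : ℕ) (hm : 1 ≤ m) (w : Fin m → ℝ)
    (hw : ∀ i, 0 < w i) (hw1 : ∑ i, w i = 1) (N : Fin m → ℕ) (B : ℕ)
    (hNB : ∑ i, N i = B) (μ₂ : ℝ) (hμ : 0 < μ₂) (hμw : μ₂ ≤ (1/16) * ⨅ i, w i)
    (φ : ((Σ i : Fin m, Fin (N i)) → Bool) → Bool) :
    ∃ δ : Fin m → ℝ, (∀ i, |δ i| ≤ 1/4) ∧ μ₂ ≤ ∑ i, w i * (δ i) ^ 2 ∧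
      (1/2) * Real.exp (-((9/4) * μ₂ * ⨅ i, (N i : ℝ) / w i)) ≤
        allocProb m N (fun _ => 0) {y | φ y = true} +
          allocProb m N δ {y | φ y = false} := by
  haveI : Nonempty (Fin m) := ⟨⟨0, hm⟩⟩
  obtain ⟨i0, hi0⟩ := exists_eq_ciInf_of_finite (f := fun i => (N i : ℝ) / w i)
  have hwmin : (⨅ i, w i) ≤ w i0 := ciInf_le (Finite.bddBelow_range _) i0
  have hμw' : μ₂ ≤ w i0 / 16 := hμw.trans (by linarith)
  set t : ℝ := Real.sqrt (μ₂ / w i0) with htdef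
  have hwi0 := hw i0
  have ht2 : t^2 = μ₂ / w i0 := Real.sq_sqrt (by positivity)
  have ht0 : 0 ≤ t := Real.sqrt_nonneg _
  have ht14 : t ≤ 1/4 := by
    have h1 : t ≤ Real.sqrt (1/16) := by
      apply Real.sqrt_le_sqrt
      rw [div_le_iff₀ hwi0]; linarith
    rwa [show (1/16:ℝ) = (1/4)^2 by norm_num, Real.sqrt_sq (by norm_num)] at h1
  set δ : Fin m → ℝ := fun i => if i = i0 then t else 0 with hδdef
  have hδi : ∀ i, 0 ≤ δ i ∧ δ i ≤ 1/4 := by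
    intro i; by_cases h : i = i0 <;> simp [hδdef, h] <;> constructor <;> linarith
  refine ⟨δ, ?_, ?_, ?_⟩
  · intro i
    rw [abs_of_nonneg (hδi i).1]; exact (hδi i).2
  · rw [Finset.sum_eq_single i0 (fun i _ hi => by simp [hδdef, hi])
      (fun h => absurd (Finset.mem_univ i0) h)]
    simp only [hδdef, if_pos rfl]
    rw [ht2, mul_div_cancel₀ _ (ne_of_gt hwi0)]
  -- main inequality
  set p0 : ((Σ i : Fin m, Fin (N i)) → Bool) → ℝ := allocPMF m N (fun _ => 0) with hp0def
  set pδ : ((Σ i : Fin m, Fin (N i)) → Bool) → ℝ := allocPMF m N δ with hpδdef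
  have hbound : ∀ i : Fin m, 0 ≤ 1/2 + δ i ∧ 1/2 + δ i ≤ 1 := by
    intro i; constructor <;> linarith [(hδi i).1, (hδi i).2]
  have hp0 : ∀ y, 0 ≤ p0 y := fun y =>
    Finset.prod_nonneg fun s _ => bernPMF_nonneg (by norm_num) (by norm_num) _
  have hpδ : ∀ y, 0 ≤ pδ y := fun y =>
    Finset.prod_nonneg fun s _ => bernPMF_nonneg (hbound s.1).1 (hbound s.1).2 _
  have hminn : ∀ y, (0:ℝ) ≤ min (p0 y) (pδ y) := fun y => le_min (hp0 y) (hpδ y)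
  -- step A : sum of mins lower-bounds the risk
  have hA : ∑ y, min (p0 y) (pδ y) ≤
      allocProb m N (fun _ => 0) {y | φ y = true} + allocProb m N δ {y | φ y = false} := by
    unfold allocProb
    rw [← Finset.sum_add_distrib]
    refine Finset.sum_le_sum fun y _ => ?_
    rcases Bool.dichotomy (φ y) with h | h
    · have e1 : Set.indicator {y | φ y = true} (allocPMF m N (fun _ => 0)) y = 0 :=
        Set.indicator_of_notMem (by simp [h]) _
      have e2 : Set.indicator {y | φ y = false} (allocPMF m N δ) y = allocPMF m N δ y :=
        Set.indicator_of_mem (by simp [h]) _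
      rw [e1, e2, zero_add]
      exact min_le_right _ _
    · have e1 : Set.indicator {y | φ y = true} (allocPMF m N (fun _ => 0)) y
          = allocPMF m N (fun _ => 0) y := Set.indicator_of_mem (by simp [h]) _
      have e2 : Set.indicator {y | φ y = false} (allocPMF m N δ) y = 0 :=
        Set.indicator_of_notMem (by simp [h]) _
      rw [e1, e2, add_zero]
      exact min_le_left _ _
  -- step B : Cauchy-Schwarz
  have hB : (∑ y, Real.sqrt (p0 y * pδ y))^2 ≤ 2 * ∑ y, min (p0 y) (pδ y) := by
    have e1 : ∑ y, Real.sqrt (p0 y * pδ y)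
        = ∑ y, Real.sqrt (min (p0 y) (pδ y)) * Real.sqrt (max (p0 y) (pδ y)) := by
      refine Finset.sum_congr rfl fun y _ => ?_
      rw [← Real.sqrt_mul (hminn y), min_mul_max]
    have e2 := Real.sum_sqrt_mul_sqrt_le (Finset.univ)
      (f := fun y => min (p0 y) (pδ y)) (g := fun y => max (p0 y) (pδ y))
      (fun y => hminn y) (fun y => le_trans (hminn y) (min_le_max))
    have e3 : ∑ y, max (p0 y) (pδ y) ≤ 2 := by
      have : ∑ y, max (p0 y) (pδ y) ≤ ∑ y, (p0 y + pδ y) :=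
        Finset.sum_le_sum fun y _ => max_le_add_of_nonneg (hp0 y) (hpδ y)
      rw [Finset.sum_add_distrib, hp0def, hpδdef, allocPMF_sum_one, allocPMF_sum_one] at this
      linarith
    have e4 : (∑ y, Real.sqrt (min (p0 y) (pδ y)) * Real.sqrt (max (p0 y) (pδ y)))^2
        ≤ (∑ y, min (p0 y) (pδ y)) * (∑ y, max (p0 y) (pδ y)) := by
      calc (∑ y, Real.sqrt (min (p0 y) (pδ y)) * Real.sqrt (max (p0 y) (pδ y)))^2
          ≤ (Real.sqrt (∑ y, min (p0 y) (pδ y)) * Real.sqrt (∑ y, max (p0 y) (pδ y)))^2 := by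
            apply pow_le_pow_left₀ (Finset.sum_nonneg fun y _ =>
              mul_nonneg (Real.sqrt_nonneg _) (Real.sqrt_nonneg _)) e2
        _ = (∑ y, min (p0 y) (pδ y)) * (∑ y, max (p0 y) (pδ y)) := by
            rw [mul_pow, Real.sq_sqrt (Finset.sum_nonneg fun y _ => hminn y),
              Real.sq_sqrt (Finset.sum_nonneg fun y _ => le_trans (hminn y) min_le_max)]
    rw [e1]
    calc (∑ y, Real.sqrt (min (p0 y) (pδ y)) * Real.sqrt (max (p0 y) (pδ y)))^2
        ≤ (∑ y, min (p0 y) (pδ y)) * (∑ y, max (p0 y) (pδ y)) := e4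
      _ ≤ (∑ y, min (p0 y) (pδ y)) * 2 :=
          mul_le_mul_of_nonneg_left e3 (Finset.sum_nonneg fun y _ => hminn y)
      _ = 2 * ∑ y, min (p0 y) (pδ y) := by ring
  -- step C : Hellinger affinity computation
  set H : ℝ := Real.sqrt ((1/2) * (1/2 + t)) + Real.sqrt ((1/2) * (1/2 - t)) with hHdef
  have hC : ∑ y, Real.sqrt (p0 y * pδ y) = H ^ (N i0) := by
    have step1 : ∀ y, Real.sqrt (p0 y * pδ y)
        = ∏ s : Σ i : Fin m, Fin (N i),
            Real.sqrt (bernPMF (1/2 + 0) (y s) * bernPMF (1/2 + δ s.1) (y s)) := by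
      intro y
      rw [hp0def, hpδdef]
      unfold allocPMF
      rw [← Finset.prod_mul_distrib]
      exact sqrt_finset_prod _ _ fun s _ =>
        mul_nonneg (bernPMF_nonneg (by norm_num) (by norm_num) _)
          (bernPMF_nonneg (hbound s.1).1 (hbound s.1).2 _)
    calc ∑ y, Real.sqrt (p0 y * pδ y)
        = ∑ y : (Σ i : Fin m, Fin (N i)) → Bool, ∏ s : Σ i : Fin m, Fin (N i),
            Real.sqrt (bernPMF (1/2 + 0) (y s) * bernPMF (1/2 + δ s.1) (y s)) :=
          Finset.sum_congr rfl fun y _ => step1 y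
      _ = ∏ s : Σ i : Fin m, Fin (N i),
            (Real.sqrt (bernPMF (1/2 + 0) true * bernPMF (1/2 + δ s.1) true)
              + Real.sqrt (bernPMF (1/2 + 0) false * bernPMF (1/2 + δ s.1) false)) :=
          sum_fun_bool_prod (fun (s : Σ i : Fin m, Fin (N i)) (b : Bool) =>
            Real.sqrt (bernPMF (1/2 + 0) b * bernPMF (1/2 + δ s.1) b))
      _ = ∏ i : Fin m, (Real.sqrt ((1/2) * (1/2 + δ i)) + Real.sqrt ((1/2) * (1/2 - δ i))) ^ (N i) := by
          rw [← Finset.univ_sigma_univ, Finset.prod_sigma]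
          refine Finset.prod_congr rfl fun i _ => ?_
          dsimp only
          rw [Finset.prod_const]
          simp only [bernPMF, if_true, if_false, Finset.card_univ, Fintype.card_fin]
          norm_num
          rw [show 1 - (1/2 + δ i) = 1/2 - δ i by ring]
      _ = H ^ (N i0) := by
          rw [Finset.prod_eq_single i0 (fun i _ hi => by
              simp only [hδdef, if_neg hi, add_zero, sub_zero]
              rw [show (1/2 : ℝ) * (1/2) = (1/2)^2 by norm_num, Real.sqrt_sq (by norm_num)]
              norm_num)
            (fun h => absurd (Finset.mem_univ i0) h)]
          simp [hHdef, hδdef]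
  -- step D : final chain
  have hμt : μ₂ = t^2 * w i0 := by
    rw [ht2]; field_simp
  have harg : (9/4) * μ₂ * ⨅ i, (N i : ℝ) / w i = (N i0 : ℝ) * ((9/4) * t^2) := by
    rw [← hi0, hμt]; field_simp
  have hD : (1/2) * Real.exp (-((9/4) * μ₂ * ⨅ i, (N i : ℝ) / w i)) ≤
      (1/2) * (H ^ (N i0))^2 := by
    rw [harg]
    have hexp : Real.exp (-((N i0 : ℝ) * ((9/4) * t^2)))
        = (Real.exp (-((9/4) * t^2))) ^ (N i0) := by
      rw [← Real.exp_nat_mul]; ring_nf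
    rw [hexp]
    have hkey := scalar_key ht0 ht14
    have h6 : (Real.exp (-((9/4) * t^2))) ^ (N i0) ≤ (H^2) ^ (N i0) :=
      pow_le_pow_left₀ (Real.exp_nonneg _) hkey _
    have h7 : (H^2) ^ (N i0) = (H ^ (N i0))^2 := by
      rw [← pow_mul, ← pow_mul, Nat.mul_comm]
    linarith [h6, h7.le, h7.ge]
  calc (1/2) * Real.exp (-((9/4) * μ₂ * ⨅ i, (N i : ℝ) / w i))
      ≤ (1/2) * (H ^ (N i0))^2 := hD
    _ = (1/2) * (∑ y, Real.sqrt (p0 y * pδ y))^2 := by rw [hC]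
    _ ≤ ∑ y, min (p0 y) (pδ y) := by linarith [hB]
    _ ≤ _ := hA
end

section
/- Let m ≥ 1, let w_1,…,w_m > 0 with Σ_i w_i = 1, and let μ₂ satisfy 0 < μ₂ ≤ (1/16)·min_i w_i. Then for every allocation N_1,…,N_m ∈ ℕ with Σ_i N_i = B and every test φ on the B observations, sup over δ ∈ H1(μ₂) with each |δ_i| ≤ 1/4 of [ P_0^N(φ = 1) + P_δ^N(φ = 0) ] ≥ (1/2)·exp( −(9/4)·B·μ₂ ). In particular the infimum of this worst-case risk over all allocations and tests is at least (1/2)·exp(−(9/4)·B·μ₂). -/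
open Real

lemma exp_bound_aux (t : ℝ) (h0 : 0 ≤ t) (h16 : t ≤ 1/16) :
    Real.exp (-((9/4) * t)) ≤ 1/2 + Real.sqrt (1/4 - t) := by
  have hq : (0:ℝ) ≤ 1/4 - t := by linarith
  set r := Real.sqrt (1/4 - t) with hr
  have hr0 : 0 ≤ r := Real.sqrt_nonneg _
  have hr2 : r^2 = 1/4 - t := Real.sq_sqrt hq
  have h1 : (1:ℝ) + (9/4)*t ≤ Real.exp ((9/4)*t) := by
    have := Real.add_one_le_exp ((9/4)*t); linarith
  have hpos : (0:ℝ) < 1 + (9/4)*t := by linarith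
  have h2 : Real.exp (-((9/4)*t)) ≤ 1/(1 + (9/4)*t) := by
    rw [Real.exp_neg, ← one_div]
    exact one_div_le_one_div_of_le hpos h1
  refine h2.trans ?_
  rw [div_le_iff₀ hpos]
  have key : (0:ℝ) ≤ t * (5 - 18*t - (81/4)*t^2) := by nlinarith
  have hsq : (r*(1 + 9/4*t))^2 ≥ ((1 - 9/4*t)/2)^2 := by nlinarith
  nlinarith [mul_nonneg hr0 hpos.le, hsq]

lemma sqrt_prod_eq {ι : Type*} (s : Finset ι) (f : ι → ℝ) (h : ∀ i ∈ s, 0 ≤ f i) :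
    Real.sqrt (∏ i ∈ s, f i) = ∏ i ∈ s, Real.sqrt (f i) := by
  induction s using Finset.cons_induction with
  | empty => simp
  | cons a s ha ih =>
    rw [Finset.prod_cons, Finset.prod_cons,
      Real.sqrt_mul (h a (Finset.mem_cons_self a s)),
      ih (fun i hi => h i (Finset.mem_cons_of_mem hi))]

lemma sum_prod_bool {ι : Type*} [Fintype ι] [DecidableEq ι] (g : ι → Bool → ℝ) :
    ∑ y : ι → Bool, ∏ s : ι, g s (y s) = ∏ s : ι, (g s true + g s false) := by
  rw [show (∏ s : ι, (g s true + g s false)) = ∏ s : ι, ∑ b : Bool, g s b by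
    simp, Fintype.prod_sum]

lemma testing_lower {ι : Type*} [Fintype ι] [DecidableEq ι]
    (p q : ι → Bool → ℝ) (hp : ∀ s b, 0 ≤ p s b) (hq : ∀ s b, 0 ≤ q s b)
    (hp1 : ∀ s, p s true + p s false = 1) (hq1 : ∀ s, q s true + q s false = 1)
    (A : Set (ι → Bool)) (c : ℝ) (hc : 0 ≤ c)
    (hρ : ∀ s : ι, c ≤ (Real.sqrt (p s true * q s true) +
      Real.sqrt (p s false * q s false))^2) :
    (1/2) * c ^ (Fintype.card ι) ≤
      (∑ y : ι → Bool, A.indicator (fun y => ∏ s, q s (y s)) y) +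
      (∑ y : ι → Bool, Aᶜ.indicator (fun y => ∏ s, p s (y s)) y) := by
  classical
  set Pf : (ι → Bool) → ℝ := fun y => ∏ s, p s (y s) with hPf
  set Qf : (ι → Bool) → ℝ := fun y => ∏ s, q s (y s) with hQf
  have hPf0 : ∀ y, 0 ≤ Pf y := fun y => Finset.prod_nonneg fun s _ => hp s (y s)
  have hQf0 : ∀ y, 0 ≤ Qf y := fun y => Finset.prod_nonneg fun s _ => hq s (y s)
  have hsumP : ∑ y : ι → Bool, Pf y = 1 := by
    rw [hPf, sum_prod_bool]; exact Finset.prod_eq_one fun s _ => hp1 s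
  have hsumQ : ∑ y : ι → Bool, Qf y = 1 := by
    rw [hQf, sum_prod_bool]; exact Finset.prod_eq_one fun s _ => hq1 s
  -- Hellinger affinity factorizes
  have hHell : ∑ y : ι → Bool, Real.sqrt (Pf y * Qf y) =
      ∏ s : ι, (Real.sqrt (p s true * q s true) + Real.sqrt (p s false * q s false)) := by
    have h1 : ∀ y : ι → Bool, Real.sqrt (Pf y * Qf y) =
        ∏ s : ι, Real.sqrt (p s (y s) * q s (y s)) := by
      intro y
      rw [hPf, hQf]
      simp only
      rw [← Finset.prod_mul_distrib, sqrt_prod_eq]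
      intro s _; exact mul_nonneg (hp s (y s)) (hq s (y s))
    rw [Finset.sum_congr rfl (fun y _ => h1 y)]
    exact sum_prod_bool (fun s b => Real.sqrt (p s b * q s b))
  have hHell2 : c ^ (Fintype.card ι) ≤ (∑ y : ι → Bool, Real.sqrt (Pf y * Qf y))^2 := by
    rw [hHell, ← Finset.prod_pow]
    calc c ^ (Fintype.card ι) = ∏ _s : ι, c := by rw [Finset.prod_const, Finset.card_univ]
      _ ≤ _ := Finset.prod_le_prod (fun s _ => hc) (fun s _ => hρ s)
  -- min of the two PMFs
  set Mn : (ι → Bool) → ℝ := fun y => min (Qf y) (Pf y) with hMn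
  have hMn0 : ∀ y, 0 ≤ Mn y := fun y => le_min (hQf0 y) (hPf0 y)
  have hCS : (∑ y : ι → Bool, Real.sqrt (Pf y * Qf y))^2 ≤ (∑ y : ι → Bool, Mn y) * 2 := by
    have h1 : ∀ y : ι → Bool, Real.sqrt (Pf y * Qf y) =
        Real.sqrt (Mn y) * Real.sqrt (max (Qf y) (Pf y)) := by
      intro y
      rw [← Real.sqrt_mul (hMn0 y), hMn]
      simp only
      rw [min_mul_max, mul_comm]
    rw [Finset.sum_congr rfl (fun y _ => h1 y)]
    have hcs := Finset.sum_mul_sq_le_sq_mul_sq Finset.univ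
      (fun y : ι → Bool => Real.sqrt (Mn y)) (fun y => Real.sqrt (max (Qf y) (Pf y)))
    have e1 : ∑ y : ι → Bool, Real.sqrt (Mn y)^2 = ∑ y : ι → Bool, Mn y :=
      Finset.sum_congr rfl fun y _ => Real.sq_sqrt (hMn0 y)
    have e2 : ∑ y : ι → Bool, Real.sqrt (max (Qf y) (Pf y))^2
        = ∑ y : ι → Bool, max (Qf y) (Pf y) :=
      Finset.sum_congr rfl fun y _ => Real.sq_sqrt (le_max_iff.mpr (Or.inl (hQf0 y)))
    have e3 : ∑ y : ι → Bool, max (Qf y) (Pf y) ≤ 2 := by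
      calc ∑ y : ι → Bool, max (Qf y) (Pf y) ≤ ∑ y : ι → Bool, (Qf y + Pf y) :=
            Finset.sum_le_sum fun y _ => max_le (le_add_of_nonneg_right (hPf0 y))
              (le_add_of_nonneg_left (hQf0 y))
        _ = 2 := by rw [Finset.sum_add_distrib, hsumQ, hsumP]; norm_num
    have hMnsum : 0 ≤ ∑ y : ι → Bool, Mn y := Finset.sum_nonneg fun y _ => hMn0 y
    calc (∑ y : ι → Bool, Real.sqrt (Mn y) * Real.sqrt (max (Qf y) (Pf y)))^2
        ≤ (∑ y : ι → Bool, Real.sqrt (Mn y)^2) *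
            ∑ y : ι → Bool, Real.sqrt (max (Qf y) (Pf y))^2 := hcs
      _ = (∑ y : ι → Bool, Mn y) * ∑ y : ι → Bool, max (Qf y) (Pf y) := by rw [e1, e2]
      _ ≤ (∑ y : ι → Bool, Mn y) * 2 := mul_le_mul_of_nonneg_left e3 hMnsum
  -- risk dominates the sum of minima
  have hrisk : ∑ y : ι → Bool, Mn y ≤
      (∑ y : ι → Bool, A.indicator Qf y) + (∑ y : ι → Bool, Aᶜ.indicator Pf y) := by
    rw [← Finset.sum_add_distrib]
    apply Finset.sum_le_sum
    intro y _
    by_cases hy : y ∈ A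
    · rw [Set.indicator_of_mem hy, Set.indicator_of_notMem (by simpa using hy), add_zero]
      exact min_le_left _ _
    · rw [Set.indicator_of_notMem hy, Set.indicator_of_mem (by simpa using hy), zero_add]
      exact min_le_right _ _
  have := hHell2.trans hCS
  linarith

/-- **Minimax lower bound for any allocation.** Let `w_1,…,w_m > 0` sum to `1` and
`0 < μ₂ ≤ (1/16)·min_i w_i`. Then for every allocation `N : Fin m → ℕ` with total budget
`Σ_i N_i = B` and every test `φ` on the `B` observations, the worst-case risk over
`H1(μ₂) = {δ : Σ_i w_i·δ_i² ≥ μ₂}` (with each `|δ_i| ≤ 1/4`) satisfies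
`sup_δ [P_0^N(φ=1) + P_δ^N(φ=0)] ≥ (1/2)·exp(−(9/4)·B·μ₂)`; indeed some such `δ` attains
this bound, so the infimum of the worst-case risk over all allocations and tests is at
least `(1/2)·exp(−(9/4)·B·μ₂)`. -/
theorem minimax_lower_bound_all_allocations (m : ℕ) (hm : 1 ≤ m) (w : Fin m → ℝ)
    (hw : ∀ i, 0 < w i) (hw1 : ∑ i, w i = 1) (μ₂ : ℝ) (hμ : 0 < μ₂)
    (hμw : μ₂ ≤ (1/16) * ⨅ i, w i) (B : ℕ) (N : Fin m → ℕ) (hNB : ∑ i, N i = B)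
    (φ : ((Σ i : Fin m, Fin (N i)) → Bool) → Bool) :
    ∃ δ : Fin m → ℝ, (∀ i, |δ i| ≤ 1/4) ∧ μ₂ ≤ ∑ i, w i * (δ i) ^ 2 ∧
      (1/2) * Real.exp (-((9/4) * B * μ₂)) ≤
        allocProb m N (fun _ => 0) {y | φ y = true} +
          allocProb m N δ {y | φ y = false} := by
  classical
  have hne : Nonempty (Fin m) := Fin.pos_iff_nonempty.mp hm
  have hw1' : ∀ i, w i ≤ 1 := fun i =>
    hw1 ▸ Finset.single_le_sum (fun j _ => (hw j).le) (Finset.mem_univ i)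
  have hμ16 : μ₂ ≤ 1/16 := by
    obtain ⟨i⟩ := hne
    have h1 : (⨅ j, w j) ≤ w i := ciInf_le (Finite.bddBelow_range w) i
    have h2 := hw1' i
    linarith
  set ε := Real.sqrt μ₂ with hεdef
  have hε0 : 0 ≤ ε := Real.sqrt_nonneg _
  have hε2 : ε^2 = μ₂ := Real.sq_sqrt hμ.le
  have hε4 : ε ≤ 1/4 := by nlinarith
  refine ⟨fun _ => ε, fun i => by rw [abs_of_nonneg hε0]; exact hε4, by
    rw [← Finset.sum_mul, hw1, one_mul, hε2], ?_⟩
  have hq4 : (0:ℝ) ≤ 1/4 - μ₂ := by linarith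
  -- per-coordinate Hellinger bound
  have hρ : ∀ s : Σ i : Fin m, Fin (N i), Real.exp (-((9/4) * μ₂)) ≤
      (Real.sqrt (bernPMF (1/2 + ε) true * bernPMF (1/2 + 0) true) +
        Real.sqrt (bernPMF (1/2 + ε) false * bernPMF (1/2 + 0) false))^2 := by
    intro s
    have ha : (0:ℝ) ≤ (1/2 + ε) * (1/2) := by nlinarith
    have hb : (0:ℝ) ≤ (1/2 - ε) * (1/2) := by nlinarith
    have hmul : Real.sqrt ((1/2 + ε) * (1/2)) * Real.sqrt ((1/2 - ε) * (1/2)) =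
        Real.sqrt (1/4 - μ₂) * (1/2) := by
      rw [← Real.sqrt_mul ha, show ((1/2 + ε) * (1/2)) * ((1/2 - ε) * (1/2)) =
        (1/4 - μ₂) * ((1/2)^2) by rw [← hε2]; ring, Real.sqrt_mul hq4,
        Real.sqrt_sq (by norm_num : (0:ℝ) ≤ 1/2)]
    have hval : (Real.sqrt (bernPMF (1/2 + ε) true * bernPMF (1/2 + 0) true) +
        Real.sqrt (bernPMF (1/2 + ε) false * bernPMF (1/2 + 0) false))^2
        = 1/2 + Real.sqrt (1/4 - μ₂) := by
      have et : bernPMF (1/2 + ε) true * bernPMF (1/2 + 0) true = (1/2 + ε) * (1/2) := by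
        simp [bernPMF]
      have ef : bernPMF (1/2 + ε) false * bernPMF (1/2 + 0) false = (1/2 - ε) * (1/2) := by
        simp [bernPMF]; ring
      rw [et, ef, add_sq, Real.sq_sqrt ha, Real.sq_sqrt hb]
      linear_combination 2 * hmul
    rw [hval]
    exact exp_bound_aux μ₂ hμ.le hμ16
  have hcard : Fintype.card (Σ i : Fin m, Fin (N i)) = B := by
    simp [Fintype.card_sigma, hNB]
  have hcompl : ({y : (Σ i : Fin m, Fin (N i)) → Bool | φ y = true})ᶜ
      = {y | φ y = false} := by
    ext y; simp
  have key := testing_lower (fun _ : Σ i : Fin m, Fin (N i) => bernPMF (1/2 + ε))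
    (fun _ => bernPMF (1/2 + 0))
    (fun s b => by cases b <;> simp [bernPMF] <;> linarith)
    (fun s b => by cases b <;> norm_num [bernPMF])
    (fun s => by simp [bernPMF]) (fun s => by norm_num [bernPMF])
    {y | φ y = true} (Real.exp (-((9/4) * μ₂))) (Real.exp_nonneg _) hρ
  rw [hcompl, hcard] at key
  have hexp : Real.exp (-((9/4) * μ₂)) ^ B = Real.exp (-((9/4) * B * μ₂)) := by
    rw [← Real.exp_nat_mul]; congr 1; ring
  rw [hexp] at key
  unfold allocProb allocPMF
  exact key
end
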